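/- Let g : ℝ → ℂ be an l-periodic C¹ arc-length parametrization of a Dini-smooth Jordan curve with modulus of continuity ω for g', and let f : ℝ → ℝ be an L-Lipschitz nondecreasing function with f(t + 2π) = f(t) + l. Then for every τ the integral T[f](τ) = ∫₀^{2π} Re[ conj(g(f(t)) − g(f(τ))) · i g'(f(τ)) ] / (2 sin²((t−τ)/2)) dt converges absolutely. -/

import Mathlib

open MeasureTheory Set Real

/-- The kernel `K(s,t) = Re[ conj(g(t) − g(s)) · i g'(s) ]`. -/
noncomputable def Kker (g : ℝ → ℂ) (s t : ℝ) : ℝ :=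
  ((starRingEnd ℂ) (g t - g s) * (Complex.I * deriv g s)).re

/-!
The tangential part `(t - s) g'(s)` of `g(t) - g(s)` drops out of the kernel, so the mean value
inequality applied to `g - g'(s) · id` gives `|K(f τ, f t)| ≤ L |t - τ| min(ω(L |t - τ|), 2)`.
As `sin²(x / 2) ≥ (x / π)²` on `[-π, π]`, the integrand is `O(ω(L |x|) / |x|)` in `x = t - τ`,
which is integrable near `0` by the Dini condition and bounded away from `0`. Periodicity then
moves the window `(τ - π, τ + π]` to `(0, 2π]`.
-/

lemma abs_Kker_le {g : ℝ → ℂ} (hg : Differentiable ℝ g) {s t M : ℝ}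
    (hM : ∀ u ∈ uIcc s t, ‖deriv g u - deriv g s‖ ≤ M) :
    |Kker g s t| ≤ ‖deriv g s‖ * (M * |t - s|) := by
  set h : ℝ → ℂ := fun u => g u - u • deriv g s
  have hderiv : ∀ u, HasDerivAt h (deriv g u - deriv g s) u := fun u => by
    have := (hg u).hasDerivAt.sub ((hasDerivAt_id u).smul_const (deriv g s))
    rwa [one_smul] at this
  have hh : ‖h t - h s‖ ≤ M * |t - s| := by
    simpa [Real.norm_eq_abs] using Convex.norm_image_sub_le_of_norm_deriv_le
      (fun u _ => (hderiv u).differentiableAt) (fun u hu => (hderiv u).deriv ▸ hM u hu)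
      (convex_uIcc s t) left_mem_uIcc right_mem_uIcc
  have hK : Kker g s t = ((starRingEnd ℂ) (h t - h s) * (Complex.I * deriv g s)).re := by
    simp only [Kker, h, Complex.mul_re, Complex.sub_re, Complex.sub_im, Complex.conj_re,
      Complex.conj_im, Complex.real_smul, Complex.mul_im, Complex.I_re, Complex.I_im,
      Complex.ofReal_re, Complex.ofReal_im]
    ring
  calc |Kker g s t| ≤ ‖(starRingEnd ℂ) (h t - h s) * (Complex.I * deriv g s)‖ :=
        hK ▸ Complex.abs_re_le_norm _
    _ = ‖deriv g s‖ * ‖h t - h s‖ := by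
        rw [norm_mul, RCLike.norm_conj, norm_mul, Complex.norm_I, one_mul, mul_comm]
    _ ≤ ‖deriv g s‖ * (M * |t - s|) := by gcongr

lemma sq_div_pi_le_sin_half_sq {x : ℝ} (hx : |x| ≤ π) : (x / π) ^ 2 ≤ sin (x / 2) ^ 2 := by
  have h := mul_abs_le_abs_sin (x := x / 2) (by rw [abs_div, abs_two]; linarith)
  refine sq_le_sq.2 (le_of_eq_of_le ?_ h)
  rw [abs_div, abs_div, abs_two, abs_of_pos pi_pos]
  ring

lemma integrableOn_Ioc_of_norm_le {φ ψ : ℝ → ℝ} {a b c C : ℝ}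
    (hφ : AEStronglyMeasurable φ) (hψ : IntegrableOn ψ (Ioc a b))
    (hnear : ∀ x ∈ Ioc a b, ‖φ x‖ ≤ ψ x) (hfar : ∀ x ∈ Ioc b c, ‖φ x‖ ≤ C) :
    IntegrableOn φ (Ioc a c) := by
  have hab : IntegrableOn φ (Ioc a b) :=
    hψ.mono' hφ.restrict ((ae_restrict_iff' measurableSet_Ioc).2 (ae_of_all _ hnear))
  have hbc : IntegrableOn φ (Ioc b c) :=
    (integrableOn_const (C := C) measure_Ioc_lt_top.ne).mono' hφ.restrict
      ((ae_restrict_iff' measurableSet_Ioc).2 (ae_of_all _ hfar))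
  exact (hab.union hbc).mono_set Ioc_subset_Ioc_union_Ioc

lemma integrableOn_comp_mul_div {ω : ℝ → ℝ} {k c : ℝ}
    (hω : IntegrableOn (fun t => ω t / t) (Ioc 0 k)) (hk : 0 ≤ k) (hc : 0 < c) :
    IntegrableOn (fun x => ω (c * x) / x) (Ioc 0 (k / c)) := by
  have h := ((intervalIntegrable_iff_integrableOn_Ioc_of_le hk).2 hω).comp_mul_left (c := c)
  rw [zero_div, intervalIntegrable_iff_integrableOn_Ioc_of_le (by positivity)] at h
  refine IntegrableOn.congr_fun (h.const_mul c) (fun x _ => ?_) measurableSet_Ioc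
  rw [← mul_div_assoc, mul_div_mul_left _ _ hc.ne']

lemma integrableOn_of_norm_le_min_div {φ ω : ℝ → ℝ} {c k C M R : ℝ} (hc : 0 < c) (hk : 0 < k)
    (hC : 0 ≤ C) (hM : 0 ≤ M) (hω : IntegrableOn (fun t => ω t / t) (Ioc 0 k))
    (hφ : AEStronglyMeasurable φ)
    (hbound : ∀ x ∈ Ioc 0 R, ‖φ x‖ ≤ C * (min (ω (c * x)) M / x)) :
    IntegrableOn φ (Ioc 0 R) := by
  have hkc : 0 < k / c := by positivity
  refine integrableOn_Ioc_of_norm_le (b := min R (k / c)) (C := C * (M / (k / c))) hφ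
    (IntegrableOn.mono_set ((integrableOn_comp_mul_div hω hk.le hc).const_mul C)
      (Ioc_subset_Ioc_right (min_le_right _ _))) (fun x hx => ?_) (fun x hx => ?_)
  · refine (hbound x ⟨hx.1, hx.2.trans (min_le_left _ _)⟩).trans ?_
    gcongr
    · exact hx.1.le
    · exact min_le_left _ _
  · have hx' : k / c < x := by
      rcases min_lt_iff.1 hx.1 with h | h
      · exact absurd hx.2 h.not_ge
      · exact h
    refine (hbound x ⟨hkc.trans hx', hx.2⟩).trans ?_
    gcongr
    exact min_le_right _ _

section Integrand

variable {g : ℝ → ℂ} {ω f : ℝ → ℝ} {L : NNReal}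

noncomputable def integrandT (g : ℝ → ℂ) (f : ℝ → ℝ) (τ t : ℝ) : ℝ :=
  Kker g (f τ) (f t) / (2 * sin ((t - τ) / 2) ^ 2)

lemma measurable_integrandT (hg : Continuous g) (hf : Continuous f) (τ : ℝ) :
    Measurable (integrandT g f τ) := by
  unfold integrandT Kker
  fun_prop

lemma periodic_integrandT {l : ℝ} (hper : ∀ s, g (s + l) = g s)
    (hfqp : ∀ t, f (t + 2 * π) = f t + l) (τ : ℝ) :
    Function.Periodic (integrandT g f τ) (2 * π) := by
  intro t
  have hsin : sin ((t + 2 * π - τ) / 2) ^ 2 = sin ((t - τ) / 2) ^ 2 := by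
    rw [show (t + 2 * π - τ) / 2 = (t - τ) / 2 + π by ring, sin_add_pi, neg_sq]
  simp only [integrandT, Kker, hfqp, hper, hsin]

variable (hg : Differentiable ℝ g) (hunit : ∀ s, ‖deriv g s‖ ≤ 1)
  (hω : ∀ δ ≥ (0:ℝ), ∀ x y : ℝ, |x - y| ≤ δ → ‖deriv g x - deriv g y‖ ≤ ω δ)
  (hfl : LipschitzWith L f)
include hg hunit hω hfl

lemma abs_Kker_comp_le (τ t : ℝ) :
    |Kker g (f τ) (f t)| ≤ min (ω (L * |t - τ|)) 2 * (L * |t - τ|) := by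
  have hf : |f t - f τ| ≤ L * |t - τ| := by
    simpa only [Real.dist_eq] using hfl.dist_le_mul t τ
  have hM : ∀ u ∈ uIcc (f τ) (f t), ‖deriv g u - deriv g (f τ)‖ ≤ min (ω (L * |t - τ|)) 2 :=
    fun u hu => le_min (hω _ (by positivity) _ _ ((abs_sub_left_of_mem_uIcc hu).trans hf))
      ((norm_sub_le _ _).trans (by linarith [hunit u, hunit (f τ)]))
  calc |Kker g (f τ) (f t)| ≤ ‖deriv g (f τ)‖ * (min (ω (L * |t - τ|)) 2 * |f t - f τ|) :=
        abs_Kker_le hg hM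
    _ ≤ 1 * (min (ω (L * |t - τ|)) 2 * (L * |t - τ|)) := by
        have := (norm_nonneg _).trans (hM _ left_mem_uIcc)
        gcongr
        exact hunit _
    _ = _ := one_mul _

lemma norm_integrandT_le {τ t : ℝ} (ht : |t - τ| ≤ π) :
    ‖integrandT g f τ t‖ ≤ π ^ 2 / 2 * L * (min (ω (L * |t - τ|)) 2 / |t - τ|) := by
  rcases eq_or_ne t τ with rfl | hne
  · simp [integrandT]
  have hpos : 0 < 2 * ((t - τ) / π) ^ 2 := by
    have := sub_ne_zero.2 hne
    positivity
  have hK := abs_Kker_comp_le hg hunit hω hfl τ t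
  have hm : 0 ≤ min (ω (L * |t - τ|)) 2 * (L * |t - τ|) := (abs_nonneg _).trans hK
  calc ‖integrandT g f τ t‖ = |Kker g (f τ) (f t)| / (2 * sin ((t - τ) / 2) ^ 2) := by
        rw [integrandT, Real.norm_eq_abs, abs_div,
          abs_of_nonneg (by positivity : (0:ℝ) ≤ 2 * sin ((t - τ) / 2) ^ 2)]
    _ ≤ min (ω (L * |t - τ|)) 2 * (L * |t - τ|) / (2 * ((t - τ) / π) ^ 2) :=
        div_le_div₀ hm hK hpos (by linarith [sq_div_pi_le_sin_half_sq ht])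
    _ = π ^ 2 / 2 * L * (min (ω (L * |t - τ|)) 2 / |t - τ|) := by
        rw [div_pow, ← sq_abs (t - τ)]
        have := abs_pos.2 (sub_ne_zero.2 hne)
        field_simp

lemma integrableOn_integrandT_comp {k : ℝ} (hk : 0 < k)
    (hωk : IntegrableOn (fun t => ω t / t) (Ioc 0 k)) (hL : 0 < (L : ℝ)) (τ : ℝ) {σ : ℝ}
    (hσ : |σ| = 1) : IntegrableOn (fun x => integrandT g f τ (τ + σ * x)) (Ioc 0 π) := by
  have hmeas := (measurable_integrandT hg.continuous hfl.continuous τ).comp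
    (measurable_const_add τ |>.comp (measurable_const_mul σ))
  refine integrableOn_of_norm_le_min_div (C := π ^ 2 / 2 * L) hL hk (by positivity) zero_le_two
    hωk hmeas.aestronglyMeasurable fun x hx => ?_
  have habs : |τ + σ * x - τ| = x := by simp [abs_mul, hσ, abs_of_pos hx.1]
  simpa only [habs] using norm_integrandT_le hg hunit hω hfl (habs.trans_le hx.2)

end Integrand

lemma intervalIntegrable_of_integrableOn_comp_add_mul {φ : ℝ → ℝ} {τ σ R : ℝ} (hσ : σ ≠ 0)
    (hR : 0 ≤ R) (h : IntegrableOn (fun x => φ (τ + σ * x)) (Ioc 0 R)) :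
    IntervalIntegrable φ volume τ (τ + σ * R) := by
  rw [← intervalIntegrable_iff_integrableOn_Ioc_of_le hR] at h
  have h' := (IntervalIntegrable.comp_mul_left_iff (f := fun x => φ (τ + x)) (a := 0)
    (b := σ * R) hσ).1 (by simpa [hσ] using h)
  simpa using (IntervalIntegrable.comp_add_left_iff (c := τ) (a := τ) (b := τ + σ * R)).1
    (by simpa using h')

theorem T_integrand_integrable_general (l : ℝ) (L : NNReal)
    (g : ℝ → ℂ) (hg : ContDiff ℝ 1 g)
    (hper : ∀ s, g (s + l) = g s)
    (hunit : ∀ s, ‖deriv g s‖ = 1)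
    (ω : ℝ → ℝ)
    (hω : ∀ δ ≥ (0:ℝ), ∀ x y : ℝ, |x - y| ≤ δ → ‖deriv g x - deriv g y‖ ≤ ω δ)
    (hωD : ∃ k > (0:ℝ), IntegrableOn (fun t => ω t / t) (Ioc 0 k))
    (f : ℝ → ℝ) (hfl : LipschitzWith L f)
    (hfqp : ∀ t, f (t + 2 * π) = f t + l) :
    ∀ τ : ℝ, IntegrableOn
      (fun t => Kker g (f τ) (f t) / (2 * Real.sin ((t - τ) / 2) ^ 2))
      (Ioc 0 (2 * π)) := by
  intro τ
  obtain ⟨k, hk, hωk⟩ := hωD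
  have hside : ∀ σ : ℝ, |σ| = 1 → IntervalIntegrable (integrandT g f τ) volume τ (τ + σ * π) :=
    fun σ hσ => intervalIntegrable_of_integrableOn_comp_add_mul (by rintro rfl; simp at hσ)
      pi_pos.le (integrableOn_integrandT_comp (L := L + 1) (hg.differentiable one_ne_zero)
        (fun s => (hunit s).le) hω (hfl.weaken le_self_add) hk hωk
        (by positivity) τ hσ)
  have hperiod : IntervalIntegrable (integrandT g f τ) volume (τ - π) (τ - π + 2 * π) := by
    rw [show τ - π + 2 * π = τ + 1 * π by ring, show τ - π = τ + -1 * π by ring]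
    exact (hside (-1) (by simp)).symm.trans (hside 1 (by simp))
  exact (intervalIntegrable_iff_integrableOn_Ioc_of_le two_pi_pos.le).1
    ((periodic_integrandT hper hfqp τ).intervalIntegrable two_pi_pos.ne' hperiod _ _)

/-- The integrand of `T[f](τ)` converges absolutely, i.e. it is (Lebesgue) integrable on
`(0, 2π)` for every `τ`. -/
theorem T_integrand_integrable (l : ℝ) (hl : 0 < l) (L : NNReal)
    (g : ℝ → ℂ) (hg : ContDiff ℝ 1 g)
    (hper : ∀ s, g (s + l) = g s)
    (hunit : ∀ s, ‖deriv g s‖ = 1)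
    (ω : ℝ → ℝ)
    (hω : ∀ δ ≥ (0:ℝ), ∀ x y : ℝ, |x - y| ≤ δ → ‖deriv g x - deriv g y‖ ≤ ω δ)
    (hωD : ∃ k > (0:ℝ), IntegrableOn (fun t => ω t / t) (Ioc 0 k))
    (f : ℝ → ℝ) (hf : Monotone f) (hfl : LipschitzWith L f)
    (hfqp : ∀ t, f (t + 2 * π) = f t + l) :
    ∀ τ : ℝ, IntegrableOn
      (fun t => Kker g (f τ) (f t) / (2 * Real.sin ((t - τ) / 2) ^ 2))
      (Ioc 0 (2 * π)) :=
  T_integrand_integrable_general l L g hg hper hunit ω hω hωD f hfl hfqp
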